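/- arXiv:1702.00080 — 2 statements merged into one kernel-verified Lean document; each statement's English description precedes it below -/
import Mathlib

section
/- Let p(t) ∈ ℚ[t]. Then p admits a Macaulay–Hartshorne expression (i.e., there exist integers e_0 ≥ e_1 ≥ … ≥ e_d > 0 with p(t) = Σ_{i=0}^d [C(t+i, i+1) − C(t+i−e_i, i+1)]) if and only if p admits a Gotzmann expression (i.e., there exist integers b_1 ≥ b_2 ≥ … ≥ b_r ≥ 0 with p(t) = Σ_{j=1}^r C(t + b_j − (j−1), b_j)). Moreover, each expression is unique: if two nonincreasing sequences of positive integers give equal Macaulay–Hartshorne expressions then the sequences are equal, and if two nonincreasing sequences of nonnegative integers give equal Gotzmann expressions then the sequences are equal. -/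
/-- The polynomial binomial coefficient `C(t+a, b) ∈ ℚ[t]`, equal to
`(t+a)(t+a−1)⋯(t+a−b+1)/b!` if `b ≥ 0` and `0` if `b < 0`. -/
noncomputable def polyBinom (a b : ℤ) : Polynomial ℚ :=
  if 0 ≤ b then
    (Nat.factorial b.toNat : ℚ)⁻¹ •
      (descPochhammer ℚ b.toNat).comp (Polynomial.X + Polynomial.C (a : ℚ))
  else 0

/-- The Gotzmann expression `Σ_{j=1}^r C(t + b_j − (j−1), b_j)` (here `j : Fin r` is
the 0-indexed version of `j-1`). -/
noncomputable def gotzmannSum (r : ℕ) (b : Fin r → ℤ) : Polynomial ℚ :=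
  ∑ j : Fin r, polyBinom (b j - ((j : ℕ) : ℤ)) (b j)

/-- The Macaulay–Hartshorne expression `Σ_{i=0}^d [C(t+i, i+1) − C(t+i−e_i, i+1)]`. -/
noncomputable def mhSum (d : ℕ) (e : Fin (d + 1) → ℤ) : Polynomial ℚ :=
  ∑ i : Fin (d + 1),
    (polyBinom ((i : ℕ) : ℤ) (((i : ℕ) : ℤ) + 1) -
      polyBinom (((i : ℕ) : ℤ) - e i) (((i : ℕ) : ℤ) + 1))

/-!
Conjugation of partitions links the two expressions. By Pascal's rule the `i`-th
Macaulay–Hartshorne summand telescopes to `∑_{k < e_i} C(t+i-k-1, i)`; summing this array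
column by column with the hockey-stick identity turns the Macaulay–Hartshorne expression of `e`
into the Gotzmann expression of `b_k = e*_k - 1`, where `e*_k = #{i | k < e_i}` is the conjugate
partition, of length `e_0`. Conjugation being an involution, this gives both directions of the
equivalence and reduces uniqueness of Macaulay–Hartshorne expressions to that of Gotzmann
expressions. A Gotzmann expression has degree `b_1` and a positive leading coefficient, and
removing its first term leaves the shift `t ↦ t - 1` of the Gotzmann expression of
`(b_2, …, b_r)`, so uniqueness follows by induction on `r`.
-/

open Polynomial Finset

lemma Fin.sum_filter_val_lt {M : Type*} [AddCommMonoid M] {c n : ℕ} (hc : c ≤ n) (g : ℕ → M) :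
    ∑ i ∈ (univ : Finset (Fin n)).filter (fun i : Fin n => (i : ℕ) < c), g i =
      ∑ i ∈ range c, g i := by
  refine (Finset.sum_map _ Fin.valEmbedding g).symm.trans ?_
  congr 1
  ext x
  simp only [mem_map, mem_filter, mem_univ, true_and, Fin.valEmbedding_apply, mem_range]
  exact ⟨fun ⟨i, hi, hix⟩ => hix ▸ hi, fun hx => ⟨⟨x, by omega⟩, hx, rfl⟩⟩

lemma Antitone.fin_tail {α : Type*} [Preorder α] {n : ℕ} {b : Fin (n + 1) → α} (hb : Antitone b) :
    Antitone (Fin.tail b) :=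
  fun _ _ h => hb (Fin.succ_le_succ_iff.mpr h)

lemma descPochhammer_comp_eq_factorial_smul_choose (p : ℚ[X]) (n : ℕ) :
    (descPochhammer ℚ n).comp p = n.factorial • Ring.choose p n := by
  rw [← Ring.descPochhammer_eq_factorial_smul_choose, ← aeval_eq_smeval, comp_eq_aeval,
    ← descPochhammer_map (algebraMap ℤ ℚ), aeval_map_algebraMap]

lemma polyBinom_natCast (a : ℤ) (n : ℕ) : polyBinom a n = Ring.choose (X + C (a : ℚ)) n := by
  rw [polyBinom, if_pos (Int.natCast_nonneg n), Int.toNat_natCast,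
    descPochhammer_comp_eq_factorial_smul_choose, ← Nat.cast_smul_eq_nsmul ℚ, inv_smul_smul₀]
  exact_mod_cast n.factorial_ne_zero

lemma polyBinom_of_neg {a b : ℤ} (h : b < 0) : polyBinom a b = 0 := by
  simp [polyBinom, not_le.mpr h]

lemma polyBinom_add_one_add_one (a b : ℤ) :
    polyBinom (a + 1) (b + 1) = polyBinom a (b + 1) + polyBinom a b := by
  rcases lt_trichotomy b (-1) with hb | rfl | hb
  · simp [polyBinom_of_neg (show b < 0 by omega), polyBinom_of_neg (show b + 1 < 0 by omega)]
  · simp [polyBinom]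
  · lift b to ℕ using (by omega)
    rw [← Nat.cast_add_one, polyBinom_natCast, polyBinom_natCast, polyBinom_natCast, Int.cast_add,
      Int.cast_one, C_add, C_1, ← add_assoc, Ring.choose_succ_succ, add_comm]

lemma polyBinom_add (a b c : ℤ) : polyBinom (a + c) b = taylor (c : ℚ) (polyBinom a b) := by
  unfold polyBinom
  split_ifs
  · rw [taylor_apply, smul_comp, comp_assoc]
    simp [add_assoc, add_comm]
  · simp

lemma polyBinom_sub_polyBinom_eq_sum_range (i : ℤ) (e : ℕ) :
    polyBinom i (i + 1) - polyBinom (i - e) (i + 1) =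
      ∑ k ∈ range e, polyBinom (i - (k + 1)) i := by
  have h := sum_range_sub' (fun k : ℕ => polyBinom (i - k) (i + 1)) e
  rw [Nat.cast_zero, sub_zero] at h
  rw [← h]
  refine sum_congr rfl fun k _ => ?_
  rw [sub_eq_iff_eq_add', Nat.cast_add_one, ← polyBinom_add_one_add_one]
  congr 1
  ring

lemma sum_range_polyBinom_sub (c : ℤ) (m : ℕ) :
    ∑ i ∈ range m, polyBinom (i - c) i = polyBinom (m - c) (m - 1) := by
  have h := sum_range_sub (fun i : ℕ => polyBinom (i - c) (i - 1)) m
  rw [Nat.cast_zero, polyBinom_of_neg (a := 0 - c) (b := 0 - 1) (by norm_num), sub_zero] at h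
  rw [← h]
  refine sum_congr rfl fun i _ => ?_
  have h := polyBinom_add_one_add_one ((i : ℤ) - c) ((i : ℤ) - 1)
  rw [sub_add_cancel] at h
  rw [eq_sub_iff_add_eq', add_comm, ← h]
  congr 1 <;> push_cast <;> ring

lemma natDegree_polyBinom_le (a b : ℤ) : (polyBinom a b).natDegree ≤ b.toNat := by
  unfold polyBinom
  split
  · refine (natDegree_smul_le _ _).trans ?_
    rw [natDegree_comp, descPochhammer_natDegree, natDegree_X_add_C, mul_one]
  · simp

lemma coeff_polyBinom_toNat (a : ℤ) {b : ℤ} (hb : 0 ≤ b) :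
    (polyBinom a b).coeff b.toNat = (b.toNat.factorial : ℚ)⁻¹ := by
  have hmonic := (monic_descPochhammer ℚ b.toNat).comp_X_add_C (a : ℚ)
  have hlead := hmonic.coeff_natDegree
  rw [natDegree_comp, descPochhammer_natDegree, natDegree_X_add_C, mul_one] at hlead
  rw [polyBinom, if_pos hb, coeff_smul, hlead, smul_eq_mul, mul_one]

lemma gotzmannSum_zero (b : Fin 0 → ℤ) : gotzmannSum 0 b = 0 := by
  simp [gotzmannSum]

lemma gotzmannSum_succ {n : ℕ} (b : Fin (n + 1) → ℤ) :
    gotzmannSum (n + 1) b = polyBinom (b 0) (b 0) + taylor (-1) (gotzmannSum n (Fin.tail b)) := by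
  rw [gotzmannSum, gotzmannSum, Fin.sum_univ_succ, map_sum]
  congr 1
  · simp
  · refine sum_congr rfl fun j _ => ?_
    rw [show (-1 : ℚ) = ((-1 : ℤ) : ℚ) by norm_num, ← polyBinom_add, Fin.tail, Fin.val_succ]
    congr 1
    push_cast
    ring

section Gotzmann
variable {n : ℕ} {b : Fin (n + 1) → ℤ}

lemma natDegree_gotzmannSum_le (hb : Antitone b) :
    (gotzmannSum (n + 1) b).natDegree ≤ (b 0).toNat :=
  natDegree_sum_le_of_forall_le _ _ fun j _ =>
    (natDegree_polyBinom_le _ _).trans (Int.toNat_le_toNat (hb (Fin.zero_le j)))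

lemma coeff_gotzmannSum_pos (hb : Antitone b) (hnn : ∀ j, 0 ≤ b j) :
    0 < (gotzmannSum (n + 1) b).coeff (b 0).toNat := by
  rw [gotzmannSum, finsetSum_coeff]
  refine sum_pos' (fun j _ => ?_) ⟨0, mem_univ _, ?_⟩
  · rcases (Int.toNat_le_toNat (hb (Fin.zero_le j))).eq_or_lt with h | h
    · rw [← h, coeff_polyBinom_toNat _ (hnn j)]
      positivity
    · rw [coeff_eq_zero_of_natDegree_lt ((natDegree_polyBinom_le _ _).trans_lt h)]
  · rw [coeff_polyBinom_toNat _ (hnn 0)]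
    positivity

lemma natDegree_gotzmannSum (hb : Antitone b) (hnn : ∀ j, 0 ≤ b j) :
    (gotzmannSum (n + 1) b).natDegree = (b 0).toNat :=
  natDegree_eq_of_le_of_coeff_ne_zero (natDegree_gotzmannSum_le hb)
    (coeff_gotzmannSum_pos hb hnn).ne'

lemma gotzmannSum_ne_zero (hb : Antitone b) (hnn : ∀ j, 0 ≤ b j) : gotzmannSum (n + 1) b ≠ 0 :=
  fun h => (coeff_gotzmannSum_pos hb hnn).ne' (by rw [h, coeff_zero])

end Gotzmann

theorem eq_of_gotzmannSum_eq (r₁ r₂ : ℕ) (b₁ : Fin r₁ → ℤ) (b₂ : Fin r₂ → ℤ)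
    (hb₁ : Antitone b₁) (hnn₁ : ∀ j, 0 ≤ b₁ j) (hb₂ : Antitone b₂) (hnn₂ : ∀ j, 0 ≤ b₂ j)
    (h : gotzmannSum r₁ b₁ = gotzmannSum r₂ b₂) :
    ∃ h : r₁ = r₂, ∀ j : Fin r₁, b₁ j = b₂ (Fin.cast h j) := by
  induction r₁ generalizing r₂ with
  | zero =>
    cases r₂ with
    | zero => exact ⟨rfl, fun j => j.elim0⟩
    | succ m => exact ((gotzmannSum_ne_zero hb₂ hnn₂) (by rw [← h, gotzmannSum_zero])).elim
  | succ n ih =>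
    cases r₂ with
    | zero => exact ((gotzmannSum_ne_zero hb₁ hnn₁) (by rw [h, gotzmannSum_zero])).elim
    | succ m =>
      have hlead : b₁ 0 = b₂ 0 := by
        have := natDegree_gotzmannSum hb₁ hnn₁
        rw [h, natDegree_gotzmannSum hb₂ hnn₂] at this
        have := hnn₁ 0; have := hnn₂ 0
        omega
      rw [gotzmannSum_succ, gotzmannSum_succ, hlead, add_right_inj] at h
      obtain ⟨rfl, htail⟩ := ih _ _ _ hb₁.fin_tail (fun j => hnn₁ _) hb₂.fin_tail (fun j => hnn₂ _)
        (taylor_injective _ h)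
      exact ⟨rfl, Fin.cases hlead htail⟩

def conjugate {n : ℕ} (e : Fin n → ℤ) (k : ℕ) : ℕ := #{i | (k : ℤ) < e i}

section Conjugate

variable {n : ℕ} {e : Fin n → ℤ}

lemma lt_conjugate_iff (he : Antitone e) {i : Fin n} {k : ℕ} :
    (i : ℕ) < conjugate e k ↔ (k : ℤ) < e i :=
  Fin.lt_card_filter_univ_iff_apply_of_imp _ fun _ _ hji h => h.trans_le (he hji)

lemma conjugate_antitone : Antitone (conjugate e) := fun k l hkl =>
  card_le_card <| monotone_filter_right _ fun _ _ h =>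
    (by exact_mod_cast hkl : (k : ℤ) ≤ l).trans_lt h

lemma antitone_natCast_conjugate (e : Fin n → ℤ) {m : ℕ} :
    Antitone fun k : Fin m => (conjugate e k : ℤ) :=
  fun _ _ h => Nat.cast_le.mpr (conjugate_antitone h)

lemma antitone_conjugate_sub_one (e : Fin n → ℤ) {m : ℕ} :
    Antitone fun k : Fin m => (conjugate e k : ℤ) - 1 :=
  fun _ _ h => sub_le_sub_right (antitone_natCast_conjugate e h) 1

lemma conjugate_le (k : ℕ) : conjugate e k ≤ n :=
  (card_filter_le _ _).trans (card_fin n).le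

lemma conjugate_eq_of_forall_lt {k : ℕ} (h : ∀ i, (k : ℤ) < e i) : conjugate e k = n := by
  simp [conjugate, h]

lemma conjugate_conjugate (he : Antitone e) (hnn : ∀ i, 0 ≤ e i) {m : ℕ} (hm : ∀ i, e i ≤ m)
    (i : Fin n) : (conjugate (fun k : Fin m => (conjugate e k : ℤ)) i : ℤ) = e i := by
  have hmem : ∀ k : Fin m, ((i : ℕ) : ℤ) < conjugate e k ↔ (k : ℕ) < (e i).toNat := fun k => by
    rw [Nat.cast_lt, lt_conjugate_iff he, Int.lt_toNat]
  rw [conjugate, Finset.filter_congr (fun k _ => hmem k), Fin.card_filter_val_lt]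
  have := hm i; have := hnn i
  omega

lemma sum_sum_range_conjugate {M : Type*} [AddCommMonoid M] (he : Antitone e) {m : ℕ}
    (hm : ∀ i, e i ≤ m) (g : ℕ → ℕ → M) :
    ∑ i : Fin n, ∑ k ∈ range (e i).toNat, g i k =
      ∑ k ∈ range m, ∑ i ∈ range (conjugate e k), g i k := by
  rw [sum_congr rfl fun k _ => (Fin.sum_filter_val_lt (conjugate_le (e := e) k) (g · k)).symm]
  refine sum_comm' fun i k => ?_
  simp only [mem_univ, mem_range, mem_filter, true_and, lt_conjugate_iff he, Int.lt_toNat]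
  have := hm i
  omega

end Conjugate

section ConjugateSucc

variable {d : ℕ} {e : Fin (d + 1) → ℤ}

lemma conjugate_pos_iff (he : Antitone e) {k : ℕ} : 0 < conjugate e k ↔ (k : ℤ) < e 0 :=
  lt_conjugate_iff he (i := 0)

lemma conjugate_sub_one_nonneg (he : Antitone e) {k : ℕ} (hk : (k : ℤ) < e 0) :
    0 ≤ (conjugate e k : ℤ) - 1 := by
  have := (conjugate_pos_iff he).mpr hk
  omega

lemma conjugate_zero (hpos : ∀ i, 0 < e i) : conjugate e 0 = d + 1 :=
  conjugate_eq_of_forall_lt fun i => by exact_mod_cast hpos i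

end ConjugateSucc

theorem mhSum_eq_gotzmannSum {d : ℕ} {e : Fin (d + 1) → ℤ} (he : Antitone e) (hpos : ∀ i, 0 < e i)
    {r : ℕ} (hr : e 0 = r) : mhSum d e = gotzmannSum r (fun k => (conjugate e k : ℤ) - 1) := by
  have hle : ∀ i, e i ≤ r := fun i => hr ▸ he (Fin.zero_le i)
  calc mhSum d e
      = ∑ i : Fin (d + 1), ∑ k ∈ range (e i).toNat, polyBinom ((i : ℕ) - (k + 1)) (i : ℕ) := by
        refine sum_congr rfl fun i _ => ?_
        rw [← polyBinom_sub_polyBinom_eq_sum_range, Int.toNat_of_nonneg (hpos i).le]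
    _ = ∑ k ∈ range r, ∑ i ∈ range (conjugate e k), polyBinom ((i : ℕ) - (k + 1)) (i : ℕ) :=
        sum_sum_range_conjugate he hle fun i k => polyBinom ((i : ℕ) - (k + 1)) (i : ℕ)
    _ = ∑ k ∈ range r, polyBinom (conjugate e k - (k + 1)) (conjugate e k - 1) :=
        sum_congr rfl fun k _ => sum_range_polyBinom_sub _ _
    _ = gotzmannSum r (fun k => (conjugate e k : ℤ) - 1) := by
        rw [gotzmannSum, Fin.sum_univ_eq_sum_range
          (fun k => polyBinom ((conjugate e k : ℤ) - 1 - k) ((conjugate e k : ℤ) - 1))]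
        refine sum_congr rfl fun k _ => ?_
        congr 1
        ring

theorem exists_gotzmannSum_eq_mhSum {d : ℕ} {e : Fin (d + 1) → ℤ} (he : Antitone e)
    (hpos : ∀ i, 0 < e i) :
    ∃ r : ℕ, 0 < r ∧ ∃ b : Fin r → ℤ, Antitone b ∧ (∀ j, 0 ≤ b j) ∧ mhSum d e = gotzmannSum r b :=
  ⟨(e 0).toNat, by have := hpos 0; omega, _, antitone_conjugate_sub_one e,
    fun k => conjugate_sub_one_nonneg he (Int.lt_toNat.mp k.isLt),
    mhSum_eq_gotzmannSum he hpos (Int.toNat_of_nonneg (hpos 0).le).symm⟩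

theorem exists_mhSum_eq_gotzmannSum {r : ℕ} (hr : 0 < r) {b : Fin r → ℤ} (hb : Antitone b)
    (hnn : ∀ j, 0 ≤ b j) :
    ∃ d : ℕ, ∃ e : Fin (d + 1) → ℤ, Antitone e ∧ (∀ i, 0 < e i) ∧ gotzmannSum r b = mhSum d e := by
  obtain ⟨n, rfl⟩ : ∃ n, r = n + 1 := ⟨r - 1, by omega⟩
  set f : Fin (n + 1) → ℤ := fun j => b j + 1
  have hf : Antitone f := fun _ _ h => add_le_add_left (hb h) 1
  have hf_pos : ∀ j, 0 < f j := fun j => Int.lt_add_one_iff.mpr (hnn j)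
  have hf_le : ∀ j, f j ≤ ((b 0).toNat + 1 : ℕ) := fun j => by
    have := hb (Fin.zero_le j); have := hnn 0
    simp only [f]
    omega
  set e : Fin ((b 0).toNat + 1) → ℤ := fun i => conjugate f i
  have hpos : ∀ i, 0 < e i := fun i => Nat.cast_pos.mpr <| (conjugate_pos_iff hf).mpr <| by
    have := i.isLt; have := hnn 0
    simp only [f]
    omega
  have hlen : e 0 = n + 1 := by
    simp only [e, Fin.val_zero, conjugate_zero hf_pos, Nat.cast_add_one]
  refine ⟨(b 0).toNat, e, antitone_natCast_conjugate f, hpos, ?_⟩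
  rw [mhSum_eq_gotzmannSum (antitone_natCast_conjugate f) hpos hlen]
  congr 1
  funext j
  rw [conjugate_conjugate hf (fun j => (hf_pos j).le) hf_le, add_sub_cancel_right]

theorem eq_of_mhSum_eq (d₁ d₂ : ℕ) (e₁ : Fin (d₁ + 1) → ℤ) (e₂ : Fin (d₂ + 1) → ℤ)
    (he₁ : Antitone e₁) (hpos₁ : ∀ i, 0 < e₁ i) (he₂ : Antitone e₂) (hpos₂ : ∀ i, 0 < e₂ i)
    (h : mhSum d₁ e₁ = mhSum d₂ e₂) :
    ∃ h : d₁ = d₂, ∀ i : Fin (d₁ + 1), e₁ i = e₂ (Fin.cast (by rw [h]) i) := by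
  have hr₁ := (Int.toNat_of_nonneg (hpos₁ 0).le).symm
  have hr₂ := (Int.toNat_of_nonneg (hpos₂ 0).le).symm
  rw [mhSum_eq_gotzmannSum he₁ hpos₁ hr₁, mhSum_eq_gotzmannSum he₂ hpos₂ hr₂] at h
  obtain ⟨hr, hconj⟩ := eq_of_gotzmannSum_eq _ _ _ _
    (antitone_conjugate_sub_one e₁) (fun k => conjugate_sub_one_nonneg he₁ (Int.lt_toNat.mp k.isLt))
    (antitone_conjugate_sub_one e₂) (fun k => conjugate_sub_one_nonneg he₂ (Int.lt_toNat.mp k.isLt))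
    h
  replace hconj : ∀ k : Fin (e₁ 0).toNat, conjugate e₁ k = conjugate e₂ k := fun k => by
    have := hconj k
    simp only [Fin.val_cast] at this
    omega
  obtain rfl : d₁ = d₂ := by
    have := hconj ⟨0, by have := hpos₁ 0; omega⟩
    rwa [conjugate_zero hpos₁, conjugate_zero hpos₂, add_left_inj] at this
  refine ⟨rfl, fun i => ?_⟩
  calc e₁ i = conjugate (fun k : Fin (e₁ 0).toNat => (conjugate e₁ k : ℤ)) i :=
        (conjugate_conjugate he₁ (fun i => (hpos₁ i).le)
          (fun i => hr₁ ▸ he₁ (Fin.zero_le i)) i).symm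
    _ = conjugate (fun k : Fin (e₁ 0).toNat => (conjugate e₂ k : ℤ)) i := by simp only [hconj]
    _ = e₂ i := conjugate_conjugate he₂ (fun i => (hpos₂ i).le)
        (fun i => hr ▸ hr₂ ▸ he₂ (Fin.zero_le i)) i

/-- A polynomial `p ∈ ℚ[t]` admits a Macaulay–Hartshorne expression iff it admits a
Gotzmann expression, and each kind of expression is unique. -/
theorem statement_0 (p : Polynomial ℚ) :
    ((∃ d : ℕ, ∃ e : Fin (d + 1) → ℤ, Antitone e ∧ (∀ i, 0 < e i) ∧ p = mhSum d e) ↔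
      (∃ r : ℕ, 0 < r ∧ ∃ b : Fin r → ℤ, Antitone b ∧ (∀ j, 0 ≤ b j) ∧ p = gotzmannSum r b)) ∧
    (∀ (d₁ d₂ : ℕ) (e₁ : Fin (d₁ + 1) → ℤ) (e₂ : Fin (d₂ + 1) → ℤ),
      Antitone e₁ → (∀ i, 0 < e₁ i) → Antitone e₂ → (∀ i, 0 < e₂ i) →
      mhSum d₁ e₁ = mhSum d₂ e₂ →
      ∃ h : d₁ = d₂, ∀ i : Fin (d₁ + 1), e₁ i = e₂ (Fin.cast (by rw [h]) i)) ∧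
    (∀ (r₁ r₂ : ℕ) (b₁ : Fin r₁ → ℤ) (b₂ : Fin r₂ → ℤ),
      Antitone b₁ → (∀ j, 0 ≤ b₁ j) → Antitone b₂ → (∀ j, 0 ≤ b₂ j) →
      gotzmannSum r₁ b₁ = gotzmannSum r₂ b₂ →
      ∃ h : r₁ = r₂, ∀ j : Fin r₁, b₁ j = b₂ (Fin.cast h j)) := by
  refine ⟨⟨?_, ?_⟩, eq_of_mhSum_eq, eq_of_gotzmannSum_eq⟩
  · rintro ⟨d, e, he, hpos, rfl⟩
    exact exists_gotzmannSum_eq_mhSum he hpos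
  · rintro ⟨r, hr, b, hb, hnn, rfl⟩
    exact exists_mhSum_eq_gotzmannSum hr hb hnn
end

section
/- Let k be a field, n ≥ 1, and let I ⊆ k[x_0,…,x_n] be a Borel monomial ideal whose Hilbert polynomial is constant, i.e., there exists c ∈ ℕ such that dim_k (k[x_0,…,x_n]/I)_i = c for all sufficiently large i. Then there exists an integer m ∈ ℕ such that x_{n−1}^m ∈ I. -/
/-- A monomial ideal: an ideal generated by a set of monomials. -/
def IsMonomialIdeal {k : Type*} [Field k] {N : ℕ} (I : Ideal (MvPolynomial (Fin N) k)) : Prop :=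
  ∃ S : Set (Fin N →₀ ℕ), I = Ideal.span ((fun u => MvPolynomial.monomial u (1 : k)) '' S)

/-- `I` is Borel (strongly stable): for every monomial `x^u ∈ I`, every `j` with
`x_j ∣ x^u`, and every `i < j`, the monomial `x^u·x_i/x_j` lies in `I`. -/
def IsBorel {k : Type*} [Field k] {N : ℕ} (I : Ideal (MvPolynomial (Fin N) k)) : Prop :=
  ∀ u : Fin N →₀ ℕ, MvPolynomial.monomial u (1 : k) ∈ I →
    ∀ j : Fin N, u j ≠ 0 → ∀ i : Fin N, i < j →
      MvPolynomial.monomial (u - Finsupp.single j 1 + Finsupp.single i 1) (1 : k) ∈ I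

/-- The Hilbert function of `k[x_0,…,x_{N−1}]/I` in degree `i`: the `k`-dimension of the
degree-`i` homogeneous piece modulo the degree-`i` part of `I`. -/
noncomputable def hilbFn {k : Type*} [Field k] {N : ℕ} (I : Ideal (MvPolynomial (Fin N) k))
    (i : ℕ) : ℕ :=
  Module.finrank k
    ((MvPolynomial.homogeneousSubmodule (Fin N) k i) ⧸
      (Submodule.comap (MvPolynomial.homogeneousSubmodule (Fin N) k i).subtype
        (Submodule.restrictScalars k I)))

open MvPolynomial in
/-- If a Borel monomial ideal `I ⊆ k[x_0,…,x_n]` (with `n ≥ 1`) has eventually constant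
Hilbert function, then some power of `x_{n−1}` lies in `I`. -/
theorem statement_10 (k : Type*) [Field k] (n : ℕ) (hn : 1 ≤ n)
    (I : Ideal (MvPolynomial (Fin (n + 1)) k))
    (hmon : IsMonomialIdeal I) (hborel : IsBorel I)
    (c : ℕ) (hc : ∃ N : ℕ, ∀ i : ℕ, N ≤ i → hilbFn I i = c) :
    ∃ m : ℕ, (MvPolynomial.X (⟨n - 1, by omega⟩ : Fin (n + 1))) ^ m ∈ I := by
  by_contra hcon
  push_neg at hcon
  set p : Fin (n + 1) := ⟨n - 1, by omega⟩ with hp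
  set q : Fin (n + 1) := ⟨n, by omega⟩ with hq
  have hpq : p < q := by
    simp only [hp, hq, Fin.mk_lt_mk]
    omega
  have hpq' : p ≠ q := ne_of_lt hpq
  -- Lemma A: pushing x_q into x_p
  have lemA : ∀ b a : ℕ, MvPolynomial.monomial (Finsupp.single p a + Finsupp.single q b)
      (1 : k) ∈ I → MvPolynomial.monomial (Finsupp.single p (a + b)) (1 : k) ∈ I := by
    intro b
    induction b with
    | zero => intro a h; simpa using h
    | succ b ih =>
      intro a h
      have hq0 : (Finsupp.single p a + Finsupp.single q (b + 1)) q ≠ 0 := by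
        simp [Finsupp.single_apply, hpq']
      have := hborel _ h q hq0 p hpq
      have heq : Finsupp.single p a + Finsupp.single q (b + 1) - Finsupp.single q 1
          + Finsupp.single p 1 = Finsupp.single p (a + 1) + Finsupp.single q b := by
        ext x
        simp only [Finsupp.coe_add, Finsupp.coe_tsub, Pi.add_apply, Pi.sub_apply,
          Finsupp.single_apply]
        by_cases h1 : p = x <;> by_cases h2 : q = x <;>
          · simp only [h1, h2, if_true, reduceIte]
            omega
      rw [heq] at this
      have := ih (a + 1) this
      have harith : a + 1 + b = a + (b + 1) := by omega
      rwa [harith] at this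
  -- divisibility: if monomial v ∈ I and v ≤ u then monomial u ∈ I
  have hdvd : ∀ u v : Fin (n + 1) →₀ ℕ, v ≤ u →
      MvPolynomial.monomial v (1 : k) ∈ I → MvPolynomial.monomial u (1 : k) ∈ I := by
    intro u v hle hv
    have : MvPolynomial.monomial u (1 : k)
        = MvPolynomial.monomial (u - v) (1 : k) * MvPolynomial.monomial v (1 : k) := by
      rw [MvPolynomial.monomial_mul, one_mul, tsub_add_cancel_of_le hle]
    rw [this]
    exact Ideal.mul_mem_left _ _ hv
  obtain ⟨S, hS⟩ := hmon
  -- key: all the "tail" monomials are NOT in I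
  have hnotin : ∀ i a : ℕ, a ≤ i →
      MvPolynomial.monomial (Finsupp.single p a + Finsupp.single q (i - a)) (1 : k) ∉ I := by
    intro i a ha h
    have := lemA (i - a) a h
    have : MvPolynomial.monomial (Finsupp.single p i) (1 : k) ∈ I := by
      rwa [Nat.add_sub_cancel' ha] at this
    exact hcon i (by rwa [MvPolynomial.X_pow_eq_monomial])
  obtain ⟨N, hN⟩ := hc
  set i := max N c with hi
  -- degree helper
  have hdeg : ∀ a : ℕ, a ≤ i →
      Finsupp.degree (Finsupp.single p a + Finsupp.single q (i - a)) = i := by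
    intro a ha
    have h1 : Finsupp.degree (Finsupp.single p a + Finsupp.single q (i - a))
        = Finsupp.degree (Finsupp.single p a) + Finsupp.degree (Finsupp.single q (i - a)) := by
      simp [Finsupp.degree_eq_weight_one, map_add]
    rw [h1]
    have h2 : ∀ (x : Fin (n+1)) (m : ℕ), Finsupp.degree (Finsupp.single x m) = m := by
      intro x m
      simp [Finsupp.degree_eq_weight_one, Finsupp.weight_apply, Finsupp.sum_single_index]
    rw [h2, h2]; omega
  -- the family in the homogeneous submodule
  set u : Fin (i + 1) → (Fin (n + 1) →₀ ℕ) :=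
    fun a => Finsupp.single p (a : ℕ) + Finsupp.single q (i - (a : ℕ)) with hu
  have hhom : ∀ a : Fin (i + 1),
      MvPolynomial.monomial (u a) (1 : k) ∈ MvPolynomial.homogeneousSubmodule (Fin (n+1)) k i := by
    intro a
    rw [MvPolynomial.mem_homogeneousSubmodule]
    exact MvPolynomial.isHomogeneous_monomial _ (hdeg a (Nat.lt_succ_iff.mp a.isLt))
  set W := Submodule.comap (MvPolynomial.homogeneousSubmodule (Fin (n+1)) k i).subtype
      (Submodule.restrictScalars k I) with hW
  set f : Fin (i + 1) → ((MvPolynomial.homogeneousSubmodule (Fin (n+1)) k i) ⧸ W) :=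
    fun a => Submodule.Quotient.mk ⟨MvPolynomial.monomial (u a) (1 : k), hhom a⟩ with hf
  -- injectivity of u
  have huinj : Function.Injective u := by
    intro a b hab
    have hap : ∀ x : Fin (i + 1), (u x) p = (x : ℕ) := by
      intro x
      simp [hu, Finsupp.single_apply, Ne.symm hpq']
    have h1 : (u a) p = (u b) p := by rw [hab]
    rw [hap, hap] at h1
    exact Fin.ext h1
  -- linear independence
  have hli : LinearIndependent k f := by
    rw [linearIndependent_iff']
    intro s g hsum b hb
    by_contra hgb
    have hmk : (Submodule.mkQ W) (∑ a ∈ s, g a • (⟨MvPolynomial.monomial (u a) (1 : k), hhom a⟩ :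
        MvPolynomial.homogeneousSubmodule (Fin (n+1)) k i)) = 0 := by
      rw [map_sum]
      simp only [map_smul]
      exact hsum
    rw [Submodule.mkQ_apply, Submodule.Quotient.mk_eq_zero] at hmk
    have hmem : (∑ a ∈ s, g a • MvPolynomial.monomial (u a) (1 : k)) ∈ I := by
      have := hmk
      rw [hW, Submodule.mem_comap] at this
      simpa using this
    set F := ∑ a ∈ s, g a • MvPolynomial.monomial (u a) (1 : k) with hF
    have hcoeff : MvPolynomial.coeff (u b) F = g b := by
      rw [hF, MvPolynomial.coeff_sum]
      have : ∀ a ∈ s, MvPolynomial.coeff (u b) (g a • MvPolynomial.monomial (u a) (1 : k))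
          = if a = b then g a else 0 := by
        intro a _
        rw [MvPolynomial.coeff_smul, MvPolynomial.coeff_monomial]
        by_cases h : a = b
        · simp [h]
        · have : u a ≠ u b := fun he => h (huinj he)
          simp [this, h]
      rw [Finset.sum_congr rfl this, Finset.sum_ite_eq' s b (fun a => g a), if_pos hb]
    have hsupp : u b ∈ F.support := by
      rw [MvPolynomial.mem_support_iff, hcoeff]; exact hgb
    rw [hS] at hmem
    obtain ⟨v, hvS, hvle⟩ := MvPolynomial.mem_ideal_span_monomial_image.mp hmem (u b) hsupp
    have hvI : MvPolynomial.monomial v (1 : k) ∈ I := by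
      rw [hS]
      exact Ideal.subset_span ⟨v, hvS, rfl⟩
    exact hnotin i (b : ℕ) (Nat.lt_succ_iff.mp b.isLt) (hdvd (u b) v hvle hvI)
  -- finiteness
  haveI hfin : Module.Finite k (MvPolynomial.homogeneousSubmodule (Fin (n+1)) k i) := by
    apply Submodule.finiteDimensional_of_le
      (show MvPolynomial.homogeneousSubmodule (Fin (n+1)) k i
        ≤ MvPolynomial.restrictTotalDegree (Fin (n+1)) k i from ?_)
    intro x hx
    rw [MvPolynomial.mem_restrictTotalDegree]
    exact ((MvPolynomial.mem_homogeneousSubmodule _ _).mp hx).totalDegree_le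
  have hcard := hli.fintype_card_le_finrank
  rw [Fintype.card_fin] at hcard
  have hval : hilbFn I i = c := hN i (le_max_left _ _)
  rw [hilbFn] at hval
  rw [hval] at hcard
  omega
end
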